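/- arXiv:math/9809182 — 4 statements merged into one kernel-verified Lean document; each statement's English description precedes it below -/
import Mathlib

section
/- Let $m_1, m_2$ be absolutely continuous complex-valued functions on $[a,b]$ satisfying $m_j'(x) = q(x) + \kappa^2 - m_j(x)^2$ for the same $q \in L^1((a,b))$ and $\kappa \in \mathbb{C}$. If $|m_j(x) + \kappa| \le C$ for all $x \in [a,b]$ and $j = 1,2$, then $|m_1(a) - m_2(a)| \le 2C \exp(-2(b-a)[\mathrm{Re}(\kappa) - C])$. -/
open MeasureTheory Set

theorem riccati_difference_bound (a b : ℝ) (hab : a < b) (q : ℝ → ℝ)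
    (hq : IntegrableOn q (Ioo a b)) (κ : ℂ) (C : ℝ) (hC : 0 < C)
    (m₁ m₂ : ℝ → ℂ)
    (hc₁ : ContinuousOn m₁ (Icc a b)) (hc₂ : ContinuousOn m₂ (Icc a b))
    (hd₁ : ∀ x ∈ Ioo a b, HasDerivAt m₁ ((q x : ℂ) + κ ^ 2 - (m₁ x) ^ 2) x)
    (hd₂ : ∀ x ∈ Ioo a b, HasDerivAt m₂ ((q x : ℂ) + κ ^ 2 - (m₂ x) ^ 2) x)
    (hb₁ : ∀ x ∈ Icc a b, ‖m₁ x + κ‖ ≤ C)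
    (hb₂ : ∀ x ∈ Icc a b, ‖m₂ x + κ‖ ≤ C) :
    ‖m₁ a - m₂ a‖ ≤ 2 * C * Real.exp (-2 * (b - a) * (κ.re - C)) := by
  set ψ : ℝ → ℂ := fun x => (m₁ x - m₂ x) * Complex.exp (-2*κ*x) with hψdef
  set ψ' : ℝ → ℂ := fun x => -((m₁ x + κ) + (m₂ x + κ)) * ψ x with hψ'def
  -- derivative of the exponential factor
  have hexp : ∀ x : ℝ, HasDerivAt (fun y : ℝ => Complex.exp (-2*κ*y))
      (-2*κ * Complex.exp (-2*κ*x)) x := by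
    intro x
    have h1 : HasDerivAt (fun y : ℝ => ((y:ℂ))) 1 x := Complex.ofRealCLM.hasDerivAt
    have h2 : HasDerivAt (fun y : ℝ => (-2*κ*y : ℂ)) (-2*κ) x := by
      simpa using h1.const_mul (-2*κ)
    simpa [mul_comm] using h2.cexp
  have hψd : ∀ x ∈ Ioo a b, HasDerivAt ψ (ψ' x) x := by
    intro x hx
    have h1 := ((hd₁ x hx).sub (hd₂ x hx)).mul (hexp x)
    refine h1.congr_deriv ?_
    show _ = -((m₁ x + κ) + (m₂ x + κ)) * ((m₁ x - m₂ x) * Complex.exp (-2*κ*x))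
    simp only [Pi.sub_apply]
    ring
  -- norm bound on ψ'
  have hψ'le : ∀ x ∈ Ioo a b, ‖ψ' x‖ ≤ 2*C * ‖ψ x‖ := by
    intro x hx
    have hxm : x ∈ Icc a b := Ioo_subset_Icc_self hx
    have h1 : ‖m₁ x + κ + (m₂ x + κ)‖ ≤ 2*C := by
      calc ‖m₁ x + κ + (m₂ x + κ)‖ ≤ ‖m₁ x + κ‖ + ‖m₂ x + κ‖ := norm_add_le _ _
        _ ≤ C + C := by
            exact add_le_add (hb₁ x hxm) (hb₂ x hxm)
        _ = 2*C := by ring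
    rw [hψ'def]
    simp only [norm_mul, norm_neg]
    exact mul_le_mul_of_nonneg_right h1 (norm_nonneg _)
  -- G = ‖ψ‖²
  set G : ℝ → ℝ := fun x => (inner ℝ (ψ x) (ψ x) : ℝ) with hGdef
  have hGeq : ∀ x, G x = ‖ψ x‖^2 := fun x => real_inner_self_eq_norm_sq _
  have hGd : ∀ x ∈ Ioo a b, HasDerivAt G (2 * (inner ℝ (ψ x) (ψ' x) : ℝ)) x := by
    intro x hx
    have := (hψd x hx).inner ℝ (hψd x hx)
    refine this.congr_deriv ?_
    rw [real_inner_comm (ψ' x) (ψ x)]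
    ring
  -- h = G * exp(4Cx)
  set h : ℝ → ℝ := fun x => G x * Real.exp (4*C*x) with hhdef
  have hhd : ∀ x ∈ Ioo a b, HasDerivAt h
      ((2 * (inner ℝ (ψ x) (ψ' x) : ℝ)) * Real.exp (4*C*x) + G x * (4*C * Real.exp (4*C*x))) x := by
    intro x hx
    have he : HasDerivAt (fun y : ℝ => Real.exp (4*C*y)) (4*C * Real.exp (4*C*x)) x := by
      have h0 : HasDerivAt (fun y : ℝ => 4*C*y) (4*C) x := by
        simpa using (hasDerivAt_id x).const_mul (4*C)
      simpa [mul_comm] using h0.exp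
    exact (hGd x hx).mul he
  have hhd' : ∀ x ∈ Ioo a b, 0 ≤ (2 * (inner ℝ (ψ x) (ψ' x) : ℝ)) * Real.exp (4*C*x) + G x * (4*C * Real.exp (4*C*x)) := by
    intro x hx
    have h1 : -(‖ψ x‖ * ‖ψ' x‖) ≤ (inner ℝ (ψ x) (ψ' x) : ℝ) :=
      neg_le_of_abs_le (abs_real_inner_le_norm _ _)
    have h2 : ‖ψ x‖ * ‖ψ' x‖ ≤ ‖ψ x‖ * (2*C*‖ψ x‖) :=
      mul_le_mul_of_nonneg_left (hψ'le x hx) (norm_nonneg _)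
    have h3 : 0 < Real.exp (4*C*x) := Real.exp_pos _
    have h4 : G x = ‖ψ x‖^2 := hGeq x
    have h6 : 0 ≤ 2 * (inner ℝ (ψ x) (ψ' x) : ℝ) + 4*C*‖ψ x‖^2 := by nlinarith
    have h7 : (2 * (inner ℝ (ψ x) (ψ' x) : ℝ)) * Real.exp (4*C*x) + G x * (4*C * Real.exp (4*C*x))
        = (2 * (inner ℝ (ψ x) (ψ' x) : ℝ) + 4*C*‖ψ x‖^2) * Real.exp (4*C*x) := by rw [h4]; ring
    rw [h7]
    exact mul_nonneg h6 h3.le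
  -- continuity
  have hψc : ContinuousOn ψ (Icc a b) := by
    apply (hc₁.sub hc₂).mul
    exact (Complex.continuous_exp.comp ((continuous_const.mul Complex.continuous_ofReal))).continuousOn
  have hGc : ContinuousOn G (Icc a b) := by
    simp only [hGdef]
    exact hψc.inner hψc
  have hhc : ContinuousOn h (Icc a b) :=
    hGc.mul (Real.continuous_exp.comp (continuous_const.mul continuous_id)).continuousOn
  have mono : MonotoneOn h (Icc a b) := by
    apply monotoneOn_of_deriv_nonneg (convex_Icc a b) hhc
    · rw [interior_Icc]
      exact fun x hx => ((hhd x hx).differentiableAt).differentiableWithinAt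
    · rw [interior_Icc]
      intro x hx
      rw [(hhd x hx).deriv]
      exact hhd' x hx
  have hab' : h a ≤ h b := mono ⟨le_refl a, hab.le⟩ ⟨hab.le, le_refl b⟩ hab.le
  -- unfold the pieces
  have hre : ∀ x : ℝ, ‖Complex.exp (-2*κ*x)‖ = Real.exp (-2*κ.re*x) := by
    intro x
    rw [Complex.norm_exp]
    congr 1
    simp [Complex.mul_re]
  have hGval : ∀ x : ℝ, G x = (‖m₁ x - m₂ x‖)^2 * Real.exp (-2*κ.re*x)^2 := by
    intro x
    rw [hGeq, hψdef]
    simp only [norm_mul, hre]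
    ring
  set A := ‖m₁ a - m₂ a‖ with hA
  set B := ‖m₁ b - m₂ b‖ with hB
  have hBle : B ≤ 2*C := by
    have : m₁ b - m₂ b = (m₁ b + κ) - (m₂ b + κ) := by ring
    rw [hB, this]
    calc ‖(m₁ b + κ) - (m₂ b + κ)‖ ≤ ‖m₁ b + κ‖ + ‖m₂ b + κ‖ := by
          exact norm_sub_le (m₁ b + κ) (m₂ b + κ)
      _ ≤ C + C := add_le_add (hb₁ b ⟨hab.le, le_refl b⟩) (hb₂ b ⟨hab.le, le_refl b⟩)
      _ = 2*C := by ring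
  -- combine exponentials
  have hpos : 0 < Real.exp (-2*κ.re*a)^2 * Real.exp (4*C*a) := by positivity
  have hsplit : Real.exp (-2*κ.re*b)^2 * Real.exp (4*C*b)
      = Real.exp (-2*(b-a)*(κ.re-C))^2 * (Real.exp (-2*κ.re*a)^2 * Real.exp (4*C*a)) := by
    simp only [pow_two, ← Real.exp_add]
    rw [Real.exp_eq_exp]; ring
  have key : A^2 * (Real.exp (-2*κ.re*a)^2 * Real.exp (4*C*a))
      ≤ (B^2 * Real.exp (-2*(b-a)*(κ.re-C))^2) * (Real.exp (-2*κ.re*a)^2 * Real.exp (4*C*a)) := by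
    have h9 := hab'
    rw [hhdef] at h9
    simp only [hGval] at h9
    calc A^2 * (Real.exp (-2*κ.re*a)^2 * Real.exp (4*C*a))
        = A^2 * Real.exp (-2*κ.re*a)^2 * Real.exp (4*C*a) := by ring
      _ ≤ B^2 * Real.exp (-2*κ.re*b)^2 * Real.exp (4*C*b) := h9
      _ = (B^2 * Real.exp (-2*(b-a)*(κ.re-C))^2) * (Real.exp (-2*κ.re*a)^2 * Real.exp (4*C*a)) := by
          rw [mul_assoc (B^2), hsplit]; ring
  have h6 : A^2 ≤ B^2 * Real.exp (-2*(b-a)*(κ.re-C))^2 := le_of_mul_le_mul_right key hpos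
  have hBnn : (0:ℝ) ≤ B := hB ▸ norm_nonneg _
  have hA2 : A^2 ≤ (2*C*Real.exp (-2*(b-a)*(κ.re-C)))^2 := by
    have h8 : B^2 ≤ (2*C)^2 := by nlinarith
    nlinarith [h6, h8, sq_nonneg (Real.exp (-2*(b-a)*(κ.re-C)))]
  have hT : 0 ≤ 2*C * Real.exp (-2 * (b - a) * (κ.re - C)) := by positivity
  have hfin := Real.sqrt_le_sqrt hA2
  rw [Real.sqrt_sq (hA ▸ norm_nonneg (m₁ a - m₂ a))] at hfin
  rw [Real.sqrt_sq (by positivity)] at hfin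
  convert hfin using 2 <;> ring
end

section
/- Let $A, B, C, D \in \mathbb{C}$ with $AD - BC = 1$, $D \neq 0$, and $\mathrm{Im}(C/D) \neq 0$. Then the image of $\mathbb{R} \cup \{\infty\}$ under the fractional linear transformation $f(\zeta) = (A\zeta + B)/(C\zeta + D)$ is a circle of diameter $|D|^{-2} |\mathrm{Im}(C/D)|^{-1} = |\mathrm{Im}(\bar{C} D)|^{-1}$. -/
open Set

lemma abs_sub_inv_iff (c u : ℂ) (hu : u ≠ 0) :
    ‖c - u⁻¹‖ = ‖c‖ ↔ (c * u).re = 1 / 2 := by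
  have h1 : c - u⁻¹ = (c * u - 1) / u := by field_simp
  rw [h1, norm_div, div_eq_iff (norm_ne_zero_iff.mpr hu), ← norm_mul]
  rw [← sq_eq_sq₀ (norm_nonneg _) (norm_nonneg _), Complex.sq_norm, Complex.sq_norm]
  have h2 : Complex.normSq (c * u - 1) = Complex.normSq (c * u) - 2 * (c * u).re + 1 := by
    simp [Complex.normSq_apply, Complex.sub_re, Complex.sub_im]; ring
  constructor
  · intro h; nlinarith [h2]
  · intro h; rw [h2, h]; ring

theorem mobius_image_real_line_circle (A B C D : ℂ)
    (hdet : A * D - B * C = 1) (hD : D ≠ 0) (hIm : (C / D).im ≠ 0) :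
    ∃ z : ℂ,
      (range (fun t : ℝ => (A * t + B) / (C * t + D)) ∪ {A / C}) =
        Metric.sphere z ((‖D‖ ^ 2)⁻¹ * |(C / D).im|⁻¹ / 2) ∧
      (‖D‖ ^ 2)⁻¹ * |(C / D).im|⁻¹ =
        |((starRingEnd ℂ) C * D).im|⁻¹ := by
  have hC : C ≠ 0 := by
    intro h; apply hIm; simp [h]
  set m : ℝ := ((starRingEnd ℂ) C * D).im with hmdef
  have hmcoord : m = C.re * D.im - C.im * D.re := by
    simp [hmdef, Complex.mul_im]; ring
  have hnsD : Complex.normSq D ≠ 0 := by simpa using hD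
  have him2 : (C / D).im = -m / Complex.normSq D := by
    rw [Complex.div_im, hmcoord]; field_simp; ring
  have hm : m ≠ 0 := by
    intro h; apply hIm; rw [him2, h]; simp
  have habs : (‖D‖ ^ 2)⁻¹ * |(C / D).im|⁻¹ = |m|⁻¹ := by
    rw [him2, Complex.sq_norm, abs_div, abs_neg,
      abs_of_pos (Complex.normSq_pos.mpr hD)]
    field_simp
  set c : ℂ := (-Complex.I * (starRingEnd ℂ) C) / (2 * (m : ℂ)) with hcdef
  have hmC : (2 * (m:ℂ)) ≠ 0 := by
    simp [Complex.ofReal_ne_zero, hm]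
  have habsc : ‖c‖ = ‖C‖ / (2 * |m|) := by
    rw [hcdef, norm_div, norm_mul, norm_mul]
    simp [Complex.norm_conj, Complex.norm_real]
  have hre : ∀ u : ℂ, (c * u).re = ((starRingEnd ℂ) C * u).im / (2 * m) := by
    intro u
    rw [hcdef, div_mul_eq_mul_div, Complex.div_re]
    have hns2 : Complex.normSq (2 * (m:ℂ)) = (2*m)^2 := by
      simp [Complex.normSq_apply]; ring
    rw [hns2]
    simp [Complex.mul_re, Complex.mul_im, Complex.I_re, Complex.I_im]
    field_simp
    ring
  refine ⟨A / C - c / C, ?_, habs⟩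
  have hr : (‖D‖ ^ 2)⁻¹ * |(C / D).im|⁻¹ / 2 = ‖c‖ / ‖C‖ := by
    rw [habs, habsc]
    field_simp [norm_ne_zero_iff.mpr hC]
  ext w
  simp only [mem_union, mem_range, mem_singleton_iff, Metric.mem_sphere, Complex.dist_eq, hr]
  constructor
  · rintro (⟨t, rfl⟩ | rfl)
    · have hu : C * (t:ℂ) + D ≠ 0 := by
        intro h
        have hd : D = -C * t := by linear_combination h
        apply hm
        rw [hmcoord, hd]
        simp [Complex.mul_re, Complex.mul_im]
        ring
      set u : ℂ := C * (t:ℂ) + D with hudef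
      have hft : (A * t + B) / (C * t + D) - (A / C - c / C) = (c - u⁻¹) / C := by
        have hu' : (t:ℂ) * C + D ≠ 0 := by rw [mul_comm]; exact hu
        rw [hudef]
        field_simp
        linear_combination -hdet
      rw [hft, norm_div]
      have key : ‖c - u⁻¹‖ = ‖c‖ := by
        rw [abs_sub_inv_iff c u hu, hre]
        have himu : ((starRingEnd ℂ) C * u).im = m := by
          rw [hudef, hmcoord]
          simp [Complex.mul_im, Complex.add_im, Complex.mul_re, Complex.add_re]
          ring
        rw [himu]
        field_simp
      rw [key]
    · have h0 : A / C - (A / C - c / C) = c / C := by ring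
      rw [h0, norm_div]
  · intro h
    by_cases hw : w = A / C
    · right; exact hw
    · left
      have hACw : A - C * w ≠ 0 := by
        intro h0
        apply hw
        field_simp
        linear_combination -h0
      set u : ℂ := (A - C * w)⁻¹ with hudef
      have hu : u ≠ 0 := inv_ne_zero hACw
      have hinv : u⁻¹ = A - C * w := by rw [hudef, inv_inv]
      have hu1 : u * (A - C * w) = 1 := by
        rw [hudef]; field_simp
      have hwz : w - (A / C - c / C) = (c - u⁻¹) / C := by
        rw [hinv]; field_simp; ring
      rw [hwz, norm_div] at h
      have h' : ‖c - u⁻¹‖ = ‖c‖ := by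
        rw [div_eq_div_iff (norm_ne_zero_iff.mpr hC) (norm_ne_zero_iff.mpr hC)] at h
        exact mul_right_cancel₀ (norm_ne_zero_iff.mpr hC) h
      rw [abs_sub_inv_iff c u hu, hre] at h'
      have hIm0 : ((starRingEnd ℂ) C * u).im = m := by
        have e1 : ((starRingEnd ℂ) C * u).im = C.re * u.im - C.im * u.re := by
          simp [Complex.mul_im]; ring
        field_simp [hm] at h'
        rw [e1]
        linarith
      have hnum : (u.im - D.im) * C.re - (u.re - D.re) * C.im = 0 := by
        have e1 : ((starRingEnd ℂ) C * u).im = C.re * u.im - C.im * u.re := by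
          simp [Complex.mul_im]; ring
        rw [e1, hmcoord] at hIm0
        linarith
      have hreal : ((u - D) / C).im = 0 := by
        rw [Complex.div_im, Complex.sub_im, Complex.sub_re, div_sub_div_same,
          div_eq_zero_iff]
        left
        linarith [hnum]
      refine ⟨((u - D) / C).re, ?_⟩
      have ht : (((u - D) / C).re : ℂ) = (u - D) / C := by
        rw [Complex.ext_iff]
        constructor
        · simp
        · simp [hreal]
      have hu_eq : C * ((((u - D) / C).re : ℝ) : ℂ) + D = u := by
        rw [ht]; field_simp; ring
      rw [hu_eq, ht, div_eq_iff hu, hudef]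
      field_simp
      linear_combination (-(A - C*w)) * hdet
end

section
/- For $a > 0$ and $b \in \mathbb{R}$, $\int_0^\infty e^{-ax} J_1(bx) \frac{dx}{x} = \frac{\sqrt{a^2 + b^2} - a}{b}$ (for $b \neq 0$; the value is $0$ for $b = 0$), where $J_1$ is the Bessel function of the first kind of order one. -/
open MeasureTheory Set

open intervalIntegral Real Filter
open scoped ENNReal NNReal

/-- The Bessel function of the first kind of order one. -/
noncomputable def besselJ1 (x : ℝ) : ℝ :=
  ∑' n : ℕ, (-1) ^ n * (x / 2) ^ (2 * n + 1) / ((n.factorial : ℝ) * ((n + 1).factorial : ℝ))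

lemma base_int : ∫ t in (0:ℝ)..1, Real.sqrt (1 - t^2) = π/4 := by
  have h := integral_sqrt_one_sub_sq
  have hsplit : ∫ x in (-1:ℝ)..1, Real.sqrt (1 - x^2) =
      (∫ x in (-1:ℝ)..0, Real.sqrt (1 - x^2)) + ∫ x in (0:ℝ)..1, Real.sqrt (1 - x^2) := by
    rw [integral_add_adjacent_intervals] <;>
      exact (Continuous.intervalIntegrable (by continuity) _ _)
  have hneg : ∫ x in (-1:ℝ)..0, Real.sqrt (1 - x^2) = ∫ x in (0:ℝ)..1, Real.sqrt (1 - x^2) := by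
    rw [show (-1:ℝ) = -(1:ℝ) by ring, show (0:ℝ) = -(0:ℝ) by ring, ← integral_comp_neg]
    norm_num
  rw [hsplit, hneg] at h
  linarith

lemma sqrt_deriv {t : ℝ} (ht : t ∈ Ioo (0:ℝ) 1) :
    HasDerivAt (fun t : ℝ => Real.sqrt (1 - t^2)) (-t / Real.sqrt (1 - t^2)) t := by
  have h1 : (0:ℝ) < 1 - t^2 := by nlinarith [ht.1, ht.2]
  have := (Real.hasDerivAt_sqrt h1.ne').comp t
    (((hasDerivAt_pow 2 t).const_sub 1))
  refine this.congr_deriv ?_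
  have hs : Real.sqrt (1 - t^2) ≠ 0 := by positivity
  field_simp
  ring

lemma recurrence (n : ℕ) :
    (2*(n:ℝ)+1) * ∫ t in (0:ℝ)..1, t^(2*n) * Real.sqrt (1 - t^2)
      = (2*(n:ℝ)+4) * ∫ t in (0:ℝ)..1, t^(2*n+2) * Real.sqrt (1 - t^2) := by
  set G : ℝ → ℝ := fun t => t^(2*n+1) * ((1 - t^2) * Real.sqrt (1 - t^2)) with hG
  set g : ℝ → ℝ := fun t => (2*(n:ℝ)+1) * (t^(2*n) * Real.sqrt (1 - t^2))
      - (2*(n:ℝ)+4) * (t^(2*n+2) * Real.sqrt (1 - t^2)) with hg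
  have hc1 : Continuous fun t : ℝ => t^(2*n) * Real.sqrt (1 - t^2) :=
    Continuous.mul (by fun_prop) ((continuous_const.sub (continuous_pow 2)).sqrt)
  have hc2 : Continuous fun t : ℝ => t^(2*n+2) * Real.sqrt (1 - t^2) :=
    Continuous.mul (by fun_prop) ((continuous_const.sub (continuous_pow 2)).sqrt)
  have hcontg : Continuous g := ((continuous_const.mul hc1).sub (continuous_const.mul hc2))
  have hderiv : ∀ t ∈ Ioo (0:ℝ) 1, HasDerivAt G (g t) t := by
    intro t ht
    have h1 : (0:ℝ) < 1 - t^2 := by nlinarith [ht.1, ht.2]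
    have hs : Real.sqrt (1 - t^2) ≠ 0 := by positivity
    have hsq : Real.sqrt (1 - t^2) * Real.sqrt (1 - t^2) = 1 - t^2 :=
      Real.mul_self_sqrt h1.le
    have e2 : (1 - t^2) * (-t / Real.sqrt (1 - t^2)) = -t * Real.sqrt (1 - t^2) := by
      field_simp; rw [Real.sq_sqrt h1.le]
    have h2 : HasDerivAt (fun t : ℝ => (1 - t^2) * Real.sqrt (1 - t^2))
        (-3 * t * Real.sqrt (1 - t^2)) t := by
      have h := (((hasDerivAt_pow 2 t).const_sub 1)).mul (sqrt_deriv ht)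
      refine h.congr_deriv ?_
      rw [e2]
      push_cast
      ring
    have h := (hasDerivAt_pow (2*n+1) t).mul h2
    have heq : ((2*n+1 : ℕ) : ℝ) * t ^ (2*n+1-1) * ((1 - t^2) * Real.sqrt (1 - t^2))
        + t^(2*n+1) * (-3*t*Real.sqrt (1 - t^2)) = g t := by
      have h2n : 2*n+1-1 = 2*n := by omega
      rw [h2n]; simp only [hg]; push_cast; ring
    exact heq ▸ h
  have hcontG : ContinuousOn G (Icc 0 1) := by fun_prop
  have key : ∫ t in (0:ℝ)..1, g t = G 1 - G 0 := by
    apply integral_eq_sub_of_hasDeriv_right_of_le zero_le_one hcontG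
      (fun t ht => (hderiv t ht).hasDerivWithinAt)
    exact hcontg.intervalIntegrable _ _
  have hG1 : G 1 = 0 := by simp [hG]
  have hG0 : G 0 = 0 := by simp [hG]
  have key2 : (2*(n:ℝ)+1) * (∫ t in (0:ℝ)..1, t^(2*n) * Real.sqrt (1 - t^2))
      - (2*(n:ℝ)+4) * (∫ t in (0:ℝ)..1, t^(2*n+2) * Real.sqrt (1 - t^2)) = 0 := by
    rw [← intervalIntegral.integral_const_mul, ← intervalIntegral.integral_const_mul,
      ← intervalIntegral.integral_sub (Continuous.intervalIntegrable (u := fun t : ℝ => (2*(n:ℝ)+1) * (t^(2*n) * Real.sqrt (1 - t^2))) (continuous_const.mul hc1) _ _)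
        (Continuous.intervalIntegrable (u := fun t : ℝ => (2*(n:ℝ)+4) * (t^(2*n+2) * Real.sqrt (1 - t^2))) (continuous_const.mul hc2) _ _)]
    rw [hG1, hG0, sub_zero] at key
    exact key
  linarith

lemma In_eq (n : ℕ) : ∫ t in (0:ℝ)..1, t^(2*n) * Real.sqrt (1 - t^2)
    = π * (2*n).factorial / (4^(n+1) * n.factorial * (n+1).factorial) := by
  induction n with
  | zero => simpa using base_int
  | succ n ih =>
    have h4 : (2*(n:ℝ)+4) ≠ 0 := by positivity
    apply mul_left_cancel₀ h4
    rw [show 2*(n+1) = 2*n+2 by ring, ← recurrence n, ih]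
    rw [show (2*n+2).factorial = (2*n+2)*((2*n+1)*(2*n).factorial) by
      rw [← Nat.factorial_succ, ← Nat.factorial_succ],
      show (n+1+1).factorial = (n+2)*(n+1).factorial from Nat.factorial_succ _,
      show (n+1).factorial = (n+1)*n.factorial from Nat.factorial_succ _]
    have hf0 : ((2*n).factorial : ℝ) ≠ 0 := Nat.cast_ne_zero.mpr (Nat.factorial_pos _).ne'
    have hf1 : ((n).factorial : ℝ) ≠ 0 := Nat.cast_ne_zero.mpr (Nat.factorial_pos _).ne'
    push_cast
    field_simp
    ring

lemma besselJ1_eq (z : ℝ) : besselJ1 z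
    = (2/π) * z * ∫ t in Ioc (0:ℝ) 1, Real.sqrt (1-t^2) * Real.cos (z*t) := by
  set f : ℕ → ℝ → ℝ := fun n t =>
    Real.sqrt (1-t^2) * ((-1)^n * z^(2*n) * t^(2*n) / (2*n).factorial) with hf
  have hcont : ∀ n, Continuous (f n) := by
    intro n
    exact ((continuous_const.sub (continuous_pow 2)).sqrt).mul (by fun_prop)
  have hpt : ∀ t : ℝ, Real.sqrt (1-t^2) * Real.cos (z*t) = ∑' n, f n t := by
    intro t
    rw [Real.cos_eq_tsum, ← tsum_mul_left]
    congr 1; funext n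
    rw [hf]; simp only
    rw [mul_pow]
    ring
  have hsum : Summable (fun n : ℕ => |z|^(2*n) / (2*n).factorial) := by
    have h := Real.summable_pow_div_factorial |z|
    exact h.comp_injective (fun a b hab => by omega)
  have hnorm : ∀ n, ∀ t ∈ Ioc (0:ℝ) 1, ‖f n t‖ ≤ |z|^(2*n) / (2*n).factorial := by
    intro n t ht
    have h1 : |Real.sqrt (1-t^2)| ≤ 1 := by
      rw [abs_of_nonneg (Real.sqrt_nonneg _)]
      exact Real.sqrt_le_one.mpr (by nlinarith [ht.1])
    have h2 : |t|^(2*n) ≤ 1 :=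
      pow_le_one₀ (abs_nonneg t) (abs_le.mpr ⟨by linarith [ht.1], ht.2⟩)
    rw [hf]; simp only [Real.norm_eq_abs, abs_mul, abs_div, abs_pow, abs_neg, abs_one,
      one_pow, one_mul, Nat.abs_cast]
    calc |Real.sqrt (1-t^2)| * (|z|^(2*n) * |t|^(2*n) / ((2*n).factorial:ℝ))
        ≤ 1 * (|z|^(2*n) * 1 / ((2*n).factorial:ℝ)) := by gcongr
      _ = |z|^(2*n) / (2*n).factorial := by ring
  have hbound : ∀ n, ∫⁻ t in Ioc (0:ℝ) 1, ‖f n t‖₊ ∂volume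
      ≤ ENNReal.ofReal (|z|^(2*n) / (2*n).factorial) := by
    intro n
    calc ∫⁻ t in Ioc (0:ℝ) 1, ‖f n t‖₊ ∂volume
        ≤ ∫⁻ _ in Ioc (0:ℝ) 1, ENNReal.ofReal (|z|^(2*n) / (2*n).factorial) ∂volume := by
          apply setLIntegral_mono (by measurability)
          intro t ht
          rw [← ENNReal.ofReal_coe_nnreal, coe_nnnorm]
          exact ENNReal.ofReal_le_ofReal (hnorm n t ht)
      _ = ENNReal.ofReal (|z|^(2*n) / (2*n).factorial) := by
          rw [setLIntegral_const, Real.volume_Ioc]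
          norm_num
  have hinterchange : ∫ t in Ioc (0:ℝ) 1, (∑' n, f n t) ∂volume
      = ∑' n, ∫ t in Ioc (0:ℝ) 1, f n t ∂volume := by
    apply integral_tsum (fun n => (hcont n).aestronglyMeasurable)
    apply ne_top_of_le_ne_top _ (ENNReal.tsum_le_tsum hbound)
    rw [← ENNReal.ofReal_tsum_of_nonneg (fun n => by positivity) hsum]
    exact ENNReal.ofReal_ne_top
  have hIn : ∀ n, ∫ t in Ioc (0:ℝ) 1, f n t ∂volume
      = ((-1)^n * z^(2*n) / (2*n).factorial) * (π * (2*n).factorial / (4^(n+1) * n.factorial * (n+1).factorial)) := by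
    intro n
    rw [← intervalIntegral.integral_of_le zero_le_one, ← In_eq n,
      ← intervalIntegral.integral_const_mul]
    congr 1; funext t
    rw [hf]; simp only
    ring
  calc besselJ1 z = ∑' n, (2/π) * z * (((-1)^n * z^(2*n) / (2*n).factorial)
        * (π * (2*n).factorial / (4^(n+1) * n.factorial * (n+1).factorial))) := by
        rw [besselJ1]
        congr 1; funext n
        have hπ : (π:ℝ) ≠ 0 := Real.pi_ne_zero
        have hfac : ((2*n).factorial : ℝ) ≠ 0 := Nat.cast_ne_zero.mpr (Nat.factorial_pos _).ne'
        have hfac2 : ((n).factorial : ℝ) ≠ 0 := Nat.cast_ne_zero.mpr (Nat.factorial_pos _).ne'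
        have hfac3 : (((n+1)).factorial : ℝ) ≠ 0 := Nat.cast_ne_zero.mpr (Nat.factorial_pos _).ne'
        have h4 : (4:ℝ)^(n+1) = 2 * 2^(2*n+1) := by
          rw [show (4:ℝ) = 2^2 by norm_num, ← pow_mul,
            show 2*(n+1) = (2*n+1)+1 by ring, pow_succ]
          ring
        rw [div_pow, h4]
        field_simp
        ring
    _ = (2/π) * z * ∑' n, (((-1)^n * z^(2*n) / (2*n).factorial)
        * (π * (2*n).factorial / (4^(n+1) * n.factorial * (n+1).factorial))) := by
        rw [tsum_mul_left]
    _ = (2/π) * z * ∫ t in Ioc (0:ℝ) 1, Real.sqrt (1-t^2) * Real.cos (z*t) := by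
        rw [show (fun t => Real.sqrt (1-t^2) * Real.cos (z*t)) = fun t => ∑' n, f n t from funext hpt]
        rw [hinterchange]
        congr 1
        exact tsum_congr (fun n => (hIn n).symm)

lemma lapcos {a : ℝ} (c : ℝ) (ha : 0 < a) :
    ∫ x in Ioi (0:ℝ), Real.exp (-a*x) * Real.cos (c*x) = a/(a^2+c^2) := by
  have hac : (0:ℝ) < a^2 + c^2 := by positivity
  set H : ℝ → ℝ := fun x => Real.exp (-a*x) * (-a*Real.cos (c*x) + c*Real.sin (c*x)) / (a^2+c^2)
    with hH
  have hderiv : ∀ x ∈ Ici (0:ℝ), HasDerivAt H (Real.exp (-a*x) * Real.cos (c*x)) x := by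
    intro x _
    have he : HasDerivAt (fun x => Real.exp (-a*x)) (-a * Real.exp (-a*x)) x := by
      have := ((hasDerivAt_id x).const_mul (-a)).exp
      simpa [mul_comm] using this
    have hcos : HasDerivAt (fun x => Real.cos (c*x)) (-c * Real.sin (c*x)) x := by
      have := ((hasDerivAt_id x).const_mul c).cos
      simp only [id_eq] at this
      convert this using 1; ring
    have hsin : HasDerivAt (fun x => Real.sin (c*x)) (c * Real.cos (c*x)) x := by
      have := ((hasDerivAt_id x).const_mul c).sin
      simp only [id_eq] at this
      convert this using 1; ring
    have h1 : HasDerivAt (fun x => -a*Real.cos (c*x) + c*Real.sin (c*x))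
        (-a * (-c * Real.sin (c*x)) + c * (c * Real.cos (c*x))) x :=
      ((hcos.const_mul (-a)).add (hsin.const_mul c))
    have := ((he.mul h1).div_const (a^2+c^2))
    refine this.congr_deriv ?_
    field_simp
    ring
  have hint : IntegrableOn (fun x => Real.exp (-a*x) * Real.cos (c*x)) (Ioi (0:ℝ)) := by
    apply Integrable.mono' (exp_neg_integrableOn_Ioi 0 ha)
    · exact (((Real.continuous_exp.comp (continuous_const.mul continuous_id)).mul
        (Real.continuous_cos.comp (continuous_const.mul continuous_id)))).aestronglyMeasurable
    · filter_upwards with x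
      rw [norm_mul, Real.norm_eq_abs (Real.exp _), abs_of_pos (Real.exp_pos _)]
      nth_rewrite 2 [show Real.exp (-a*x) = Real.exp (-a*x) * 1 by ring]
      gcongr
      exact abs_cos_le_one _
  have htend : Filter.Tendsto H Filter.atTop (nhds 0) := by
    apply squeeze_zero_norm (a := fun x => Real.exp (-a*x) * (a + |c|) / (a^2+c^2))
    · intro x
      rw [hH]; simp only
      simp only [norm_div, norm_mul, Real.norm_eq_abs]
      rw [abs_of_pos hac, abs_of_pos (Real.exp_pos _)]
      gcongr
      calc |(-a*Real.cos (c*x) + c*Real.sin (c*x))| ≤ |(-a)*Real.cos (c*x)| + |c*Real.sin (c*x)| :=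
            abs_add_le _ _
        _ ≤ a + |c| := by
            rw [abs_mul, abs_mul, abs_neg, abs_of_pos ha]
            have := abs_cos_le_one (c*x); have := abs_sin_le_one (c*x)
            have h1 : |Real.cos (c*x)| ≤ 1 := abs_cos_le_one _
            have h2 : |Real.sin (c*x)| ≤ 1 := abs_sin_le_one _
            nlinarith [abs_nonneg c]
    · have h0 : Filter.Tendsto (fun x => Real.exp (-a*x)) Filter.atTop (nhds 0) := by
        have hmul : Filter.Tendsto (fun x : ℝ => a*x) Filter.atTop Filter.atTop :=
          Filter.Tendsto.const_mul_atTop ha Filter.tendsto_id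
        exact (Real.tendsto_exp_neg_atTop_nhds_zero.comp hmul).congr
          (fun x => by simp [Function.comp, neg_mul])
      have := (h0.mul_const (a + |c|)).div_const (a^2+c^2)
      simpa using this
  have := integral_Ioi_of_hasDerivAt_of_tendsto' hderiv hint htend
  rw [this, hH]
  norm_num
  field_simp

lemma intC {a b : ℝ} (ha : 0 < a) (hb : b ≠ 0) :
    ∫ t in (0:ℝ)..1, Real.sqrt (1-t^2) * (a/(a^2+b^2*t^2))
      = π * (Real.sqrt (a^2+b^2) - a) / (2*b^2) := by
  have hb2 : 0 < b^2 := by positivity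
  set c : ℝ := Real.sqrt (a^2+b^2) with hc
  have hcpos : 0 < c := Real.sqrt_pos.mpr (by positivity)
  have hcsq : c^2 = a^2+b^2 := Real.sq_sqrt (by positivity)
  set f : ℝ → ℝ := fun t => Real.sqrt (1-t^2) * (a/(a^2+b^2*t^2)) with hfdef
  have hfc : Continuous f := by
    apply Continuous.mul ((continuous_const.sub (continuous_pow 2)).sqrt)
    apply Continuous.div continuous_const (by fun_prop)
    intro t; positivity
  set F : ℝ → ℝ := fun t => -(a/b^2) * Real.arcsin t
      + (c/b^2) * Real.arctan (c*t/(a*Real.sqrt (1-t^2))) with hFdef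
  have hderiv : ∀ t ∈ Ioo (-1:ℝ) 1, HasDerivAt F (f t) t := by
    intro t ht
    have h1 : (0:ℝ) < 1 - t^2 := by nlinarith [ht.1, ht.2]
    set s : ℝ := Real.sqrt (1-t^2) with hs
    have hspos : 0 < s := Real.sqrt_pos.mpr h1
    have hssq : s^2 = 1 - t^2 := Real.sq_sqrt h1.le
    have hsd : HasDerivAt (fun t : ℝ => Real.sqrt (1-t^2)) (-t / s) t := by
      have h := (Real.hasDerivAt_sqrt h1.ne').comp t ((hasDerivAt_pow 2 t).const_sub 1)
      refine h.congr_deriv ?_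
      field_simp
      ring
    have harcsin : HasDerivAt Real.arcsin (1/Real.sqrt (1-t^2)) t :=
      Real.hasDerivAt_arcsin (by linarith [ht.1]) (ne_of_lt ht.2)
    have hg : HasDerivAt (fun t => c*t/(a*Real.sqrt (1-t^2))) (c/(a*s^3)) t := by
      have hnum : HasDerivAt (fun t : ℝ => c*t) c t := by
        simpa using (hasDerivAt_id t).const_mul c
      have hden : HasDerivAt (fun t : ℝ => a*Real.sqrt (1-t^2)) (a*(-t/s)) t :=
        hsd.const_mul a
      have hden0 : a * s ≠ 0 := by positivity
      have h := hnum.div hden hden0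
      refine h.congr_deriv ?_
      rw [hs] at *
      field_simp
      linear_combination hssq
    have harctan := (Real.hasDerivAt_arctan (c*t/(a*s))).comp t hg
    have hF := (harcsin.const_mul (-(a/b^2))).add (harctan.const_mul (c/b^2))
    refine hF.congr_deriv ?_
    have he1 : 1 + (c*t/(a*s))^2 = (a^2+b^2*t^2)/(a^2*s^2) := by
      field_simp
      linear_combination a^2 * hssq + t^2 * hcsq
    rw [he1]
    rw [hfdef]; simp only
    rw [← hs]
    have hden2 : (0:ℝ) < a^2+b^2*t^2 := by positivity
    field_simp
    linear_combination (-b^2) * hssq + hcsq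
  -- FTC on [0, x] for x < 1
  have hFTC : ∀ x ∈ Ico (0:ℝ) 1, ∫ t in (0:ℝ)..x, f t = F x - F 0 := by
    intro x hx
    apply intervalIntegral.integral_eq_sub_of_hasDerivAt
    · intro t ht
      rw [uIcc_of_le hx.1] at ht
      exact hderiv t ⟨by linarith [ht.1], lt_of_le_of_lt ht.2 hx.2⟩
    · exact hfc.intervalIntegrable _ _
  have hF0 : F 0 = 0 := by
    rw [hFdef]; simp
  -- limit of F at 1⁻
  have htendF : Tendsto F (nhdsWithin 1 (Iio 1)) (nhds (π * (c - a) / (2*b^2))) := by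
    have harc : Tendsto (fun x : ℝ => -(a/b^2) * Real.arcsin x) (nhdsWithin 1 (Iio 1))
        (nhds (-(a/b^2) * (π/2))) := by
      apply Tendsto.const_mul
      have := (Real.continuous_arcsin.tendsto 1)
      rw [Real.arcsin_one] at this
      exact this.mono_left nhdsWithin_le_nhds
    have hsq0 : Tendsto (fun x : ℝ => Real.sqrt (1-x^2)) (nhdsWithin 1 (Iio 1))
        (nhdsWithin 0 (Ioi 0)) := by
      rw [tendsto_nhdsWithin_iff]
      constructor
      · have hcont1 : Continuous (fun x : ℝ => Real.sqrt (1-x^2)) :=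
          (continuous_const.sub (continuous_pow 2)).sqrt
        have h := hcont1.tendsto 1
        norm_num at h
        exact h.mono_left nhdsWithin_le_nhds
      · filter_upwards [Ioo_mem_nhdsLT_of_mem (⟨by norm_num, le_refl (1:ℝ)⟩ : (1:ℝ) ∈ Ioc (-1) 1)]
          with x hx
        have : (0:ℝ) < 1 - x^2 := by nlinarith [hx.1, hx.2]
        exact Real.sqrt_pos.mpr this
    have hinv : Tendsto (fun x : ℝ => (Real.sqrt (1-x^2))⁻¹) (nhdsWithin 1 (Iio 1)) atTop :=
      tendsto_inv_nhdsGT_zero.comp hsq0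
    have hfac : Tendsto (fun x : ℝ => c*x/a) (nhdsWithin 1 (Iio 1)) (nhds (c/a)) := by
      have : Continuous (fun x : ℝ => c*x/a) := by fun_prop
      have h := (this.tendsto 1).mono_left (nhdsWithin_le_nhds (s := Iio 1))
      simpa using h
    have harg : Tendsto (fun x : ℝ => c*x/(a*Real.sqrt (1-x^2))) (nhdsWithin 1 (Iio 1)) atTop := by
      have h := hfac.pos_mul_atTop (by positivity) hinv
      apply h.congr
      intro x
      field_simp
    have harctan : Tendsto (fun x : ℝ => (c/b^2) * Real.arctan (c*x/(a*Real.sqrt (1-x^2))))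
        (nhdsWithin 1 (Iio 1)) (nhds ((c/b^2) * (π/2))) := by
      apply Tendsto.const_mul
      exact (tendsto_nhds_of_tendsto_nhdsWithin Real.tendsto_arctan_atTop).comp harg
    have := harc.add harctan
    convert this using 2
    ring
  -- limit of the primitive
  have htendI : Tendsto (fun x => ∫ t in (0:ℝ)..x, f t) (nhdsWithin 1 (Iio 1))
      (nhds (∫ t in (0:ℝ)..1, f t)) := by
    have hM : ∀ x, ‖f x‖ ≤ 1/a := by
      intro x
      rw [hfdef]; simp only [Real.norm_eq_abs, abs_mul]
      have h1 : |Real.sqrt (1-x^2)| ≤ 1 := by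
        rw [abs_of_nonneg (Real.sqrt_nonneg _)]
        exact Real.sqrt_le_one.mpr (by nlinarith [sq_nonneg x])
      have h2 : |a/(a^2+b^2*x^2)| ≤ 1/a := by
        rw [abs_of_pos (by positivity)]
        rw [div_le_div_iff₀ (by positivity) ha]
        nlinarith [sq_nonneg (b*x)]
      calc |Real.sqrt (1-x^2)| * |a/(a^2+b^2*x^2)| ≤ 1 * (1/a) :=
            mul_le_mul h1 h2 (abs_nonneg _) zero_le_one
        _ = 1/a := by ring
    rw [Metric.tendsto_nhds]
    intro ε hε
    have hδ : (0:ℝ) < min 1 (ε * a / 2) := by positivity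
    filter_upwards [Ioo_mem_nhdsLT_of_mem
      (⟨by simp [hδ], le_refl (1:ℝ)⟩ : (1:ℝ) ∈ Ioc (1 - min 1 (ε * a / 2)) 1)] with x hx
    rw [Real.dist_eq]
    have hsplit : (∫ t in (0:ℝ)..1, f t) = (∫ t in (0:ℝ)..x, f t) + ∫ t in x..1, f t := by
      rw [integral_add_adjacent_intervals (hfc.intervalIntegrable _ _) (hfc.intervalIntegrable _ _)]
    rw [hsplit]
    rw [show (∫ t in (0:ℝ)..x, f t) - ((∫ t in (0:ℝ)..x, f t) + ∫ t in x..1, f t)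
      = -(∫ t in x..1, f t) by ring, abs_neg]
    have := intervalIntegral.norm_integral_le_of_norm_le_const (C := 1/a) (fun t _ => hM t)
      (a := x) (b := 1)
    rw [Real.norm_eq_abs] at this
    calc |∫ t in x..1, f t| ≤ 1/a * |1 - x| := this
      _ < ε := by
        rw [abs_of_pos (by linarith [hx.2])]
        have hxlb : 1 - min 1 (ε * a / 2) < x := hx.1
        have hmin : min 1 (ε * a / 2) ≤ ε * a / 2 := min_le_right _ _
        rw [div_mul_eq_mul_div, one_mul, div_lt_iff₀ ha]
        nlinarith
  -- conclude
  have heq : ∀ᶠ x in nhdsWithin 1 (Iio 1), (∫ t in (0:ℝ)..x, f t) = F x - F 0 := by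
    filter_upwards [Ioo_mem_nhdsLT_of_mem (⟨by norm_num, le_refl (1:ℝ)⟩ : (1:ℝ) ∈ Ioc 0 1)]
      with x hx
    exact hFTC x ⟨hx.1.le, hx.2⟩
  have htendF' : Tendsto (fun x => ∫ t in (0:ℝ)..x, f t) (nhdsWithin 1 (Iio 1))
      (nhds (π * (c - a) / (2*b^2))) := by
    rw [hF0] at heq
    apply Tendsto.congr' _ (by simpa using htendF)
    filter_upwards [heq] with x hx
    rw [hx]
    simp
  exact tendsto_nhds_unique htendI htendF'

lemma besselJ1_zero : besselJ1 0 = 0 := by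
  rw [besselJ1_eq]; simp

theorem integral_exp_besselJ1 (a b : ℝ) (ha : 0 < a) :
    (b ≠ 0 →
      ∫ x in Ioi (0 : ℝ), Real.exp (-a * x) * besselJ1 (b * x) / x =
        (Real.sqrt (a ^ 2 + b ^ 2) - a) / b) ∧
    (b = 0 →
      ∫ x in Ioi (0 : ℝ), Real.exp (-a * x) * besselJ1 (b * x) / x = 0) := by
  constructor
  · intro hb
    have hπ : (π:ℝ) ≠ 0 := Real.pi_ne_zero
    have key : EqOn (fun x => Real.exp (-a * x) * besselJ1 (b * x) / x)
        (fun x => (2/π) * b * (Real.exp (-a*x) *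
          ∫ t in Ioc (0:ℝ) 1, Real.sqrt (1-t^2) * Real.cos (b*x*t))) (Ioi (0:ℝ)) := by
      intro x hx
      have hx0 : (x:ℝ) ≠ 0 := ne_of_gt hx
      simp only
      rw [besselJ1_eq (b*x)]
      rw [show ∀ I : ℝ, Real.exp (-a*x) * (2/π * (b*x) * I) / x
        = 2/π * b * (Real.exp (-a*x) * I) from fun I => by field_simp]
    rw [setIntegral_congr_fun measurableSet_Ioi key, MeasureTheory.integral_const_mul]
    -- Fubini
    have hswap : ∫ x in Ioi (0:ℝ), Real.exp (-a*x) *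
          ∫ t in Ioc (0:ℝ) 1, Real.sqrt (1-t^2) * Real.cos (b*x*t)
        = ∫ t in Ioc (0:ℝ) 1, ∫ x in Ioi (0:ℝ),
            Real.exp (-a*x) * (Real.sqrt (1-t^2) * Real.cos (b*x*t)) := by
      rw [show (fun x => Real.exp (-a*x) * ∫ t in Ioc (0:ℝ) 1, Real.sqrt (1-t^2) * Real.cos (b*x*t))
          = fun x => ∫ t in Ioc (0:ℝ) 1, Real.exp (-a*x) * (Real.sqrt (1-t^2) * Real.cos (b*x*t))
          from funext fun x => (MeasureTheory.integral_const_mul _ _).symm]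
      apply integral_integral_swap
      have hmeas : AEStronglyMeasurable
          (fun z : ℝ × ℝ => Real.exp (-a*z.1) * (Real.sqrt (1-z.2^2) * Real.cos (b*z.1*z.2)))
          ((volume.restrict (Ioi (0:ℝ))).prod (volume.restrict (Ioc (0:ℝ) 1))) := by
        exact Continuous.aestronglyMeasurable (by fun_prop)
      have h1 : IntegrableOn (fun x : ℝ => Real.exp (-a*x)) (Ioi 0) :=
        exp_neg_integrableOn_Ioi 0 ha
      have h2 : IntegrableOn (fun _ : ℝ => (1:ℝ)) (Ioc (0:ℝ) 1) := integrable_const _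
      apply (Integrable.mul_prod h1 h2).mono' hmeas
      · filter_upwards with z
        rw [norm_mul, Real.norm_eq_abs (Real.exp _), abs_of_pos (Real.exp_pos _)]
        gcongr
        rw [norm_mul]
        have hs1 : ‖Real.sqrt (1-z.2^2)‖ ≤ 1 := by
          rw [Real.norm_eq_abs, abs_of_nonneg (Real.sqrt_nonneg _)]
          exact Real.sqrt_le_one.mpr (by nlinarith [sq_nonneg z.2])
        have hs2 : ‖Real.cos (b*z.1*z.2)‖ ≤ 1 := by
          rw [Real.norm_eq_abs]; exact abs_cos_le_one _
        calc ‖Real.sqrt (1-z.2^2)‖ * ‖Real.cos (b*z.1*z.2)‖ ≤ 1 * 1 :=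
              mul_le_mul hs1 hs2 (norm_nonneg _) zero_le_one
          _ = 1 := by ring
    rw [hswap]
    have hinner : ∀ t ∈ Ioc (0:ℝ) 1, ∫ x in Ioi (0:ℝ),
          Real.exp (-a*x) * (Real.sqrt (1-t^2) * Real.cos (b*x*t))
        = Real.sqrt (1-t^2) * (a/(a^2+b^2*t^2)) := by
      intro t _
      rw [show (fun x => Real.exp (-a*x) * (Real.sqrt (1-t^2) * Real.cos (b*x*t)))
          = fun x => Real.sqrt (1-t^2) * (Real.exp (-a*x) * Real.cos ((b*t)*x))
          from funext fun x => by rw [show b*x*t = b*t*x by ring]; ring]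
      rw [MeasureTheory.integral_const_mul, lapcos (b*t) ha]
      rw [show (b*t)^2 = b^2*t^2 by ring]
    rw [setIntegral_congr_fun measurableSet_Ioc hinner]
    rw [← intervalIntegral.integral_of_le zero_le_one, intC ha hb]
    field_simp
  · intro hb
    subst hb
    have h0 : ∀ x : ℝ, Real.exp (-a * x) * besselJ1 (0 * x) / x = 0 := by
      intro x
      rw [zero_mul, besselJ1_zero]
      ring
    simp only [h0]
    simp
end

section
/- Let $q_0 > 0$ and $\kappa > 0$. Then $-\kappa - \int_0^\infty e^{-2\alpha\kappa} \frac{\sqrt{q_0}}{\alpha} J_1(2\alpha\sqrt{q_0})\, d\alpha = -\sqrt{\kappa^2 + q_0}$; i.e., the $A$-amplitude of the constant potential $q(x) = q_0$ on the half-line is $A(\alpha) = \frac{\sqrt{q_0}}{\alpha} J_1(2\alpha\sqrt{q_0})$, reproducing the Dirichlet $m$-function $m(-\kappa^2) = -\sqrt{\kappa^2+q_0}$ via $m(-\kappa^2) = -\kappa - \int_0^\infty A(\alpha)e^{-2\alpha\kappa} d\alpha$. -/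
open MeasureTheory Set

open Real Filter

lemma W_cos (n : ℕ) : ∫ θ in (0:ℝ)..π, Real.cos θ ^ (2*n)
    = π * (2*n).factorial / (4^n * ((n.factorial : ℝ))^2) := by
  induction n with
  | zero => simp
  | succ k ih =>
    have h : 2 * (k+1) = 2*k + 2 := by ring
    rw [h, integral_cos_pow, ih]
    simp only [Real.sin_pi, Real.sin_zero, mul_zero, zero_mul, sub_zero, zero_div, zero_add]
    have hfac : ((2*k+2).factorial : ℝ) = (2*(k:ℝ)+2) * ((2*(k:ℝ)+1) * (2*k).factorial) := by
      have e : 2*k+2 = (2*k+1) + 1 := by ring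
      rw [e, Nat.factorial_succ, Nat.factorial_succ]
      push_cast; ring
    have hfk : (((k+1)).factorial : ℝ) = ((k:ℝ)+1) * k.factorial := by
      rw [Nat.factorial_succ]; push_cast; ring
    rw [hfac, hfk]
    have h1 : ((2*k).factorial : ℝ) ≠ 0 := Nat.cast_ne_zero.2 (Nat.factorial_ne_zero _)
    have h2 : ((k).factorial : ℝ) ≠ 0 := Nat.cast_ne_zero.2 (Nat.factorial_ne_zero _)
    have h3 : ((k:ℝ)+1) ≠ 0 := by positivity
    have h5 : (4:ℝ)^k ≠ 0 := by positivity
    have h6 : (2*(k:ℝ)+2) ≠ 0 := by positivity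
    have h7 : (4:ℝ)^(k+1) = 4 * 4^k := by ring
    rw [h7]
    push_cast
    field_simp
    ring

lemma cos_pow_sin_sq (n : ℕ) : ∫ θ in (0:ℝ)..π, Real.cos θ ^ (2*n) * Real.sin θ ^ 2
    = π * (2*n).factorial / (2 * 4^n * n.factorial * ((n+1).factorial : ℝ)) := by
  have key : ∀ θ : ℝ, Real.cos θ ^ (2*n) * Real.sin θ ^ 2
      = Real.cos θ ^ (2*n) - Real.cos θ ^ (2*(n+1)) := by
    intro θ
    have hs : Real.sin θ ^ 2 = 1 - Real.cos θ ^ 2 := Real.sin_sq θ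
    have e : 2*(n+1) = 2*n + 2 := by ring
    rw [hs, e, pow_add]
    ring
  simp only [key]
  rw [intervalIntegral.integral_sub ((show Continuous fun θ => Real.cos θ ^ (2*n) from Real.continuous_cos.pow _).intervalIntegrable _ _)
    ((show Continuous fun θ => Real.cos θ ^ (2*(n+1)) from Real.continuous_cos.pow _).intervalIntegrable _ _), W_cos, W_cos]
  have hfac : ((2*(n+1)).factorial : ℝ) = (2*(n:ℝ)+2) * ((2*(n:ℝ)+1) * (2*n).factorial) := by
    have e : 2*(n+1) = (2*n+1) + 1 := by ring
    rw [e, Nat.factorial_succ, Nat.factorial_succ]; push_cast; ring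
  have hfk : (((n+1)).factorial : ℝ) = ((n:ℝ)+1) * n.factorial := by
    rw [Nat.factorial_succ]; push_cast; ring
  rw [hfac, hfk]
  have h1 : ((2*n).factorial : ℝ) ≠ 0 := Nat.cast_ne_zero.2 (Nat.factorial_ne_zero _)
  have h2 : ((n).factorial : ℝ) ≠ 0 := Nat.cast_ne_zero.2 (Nat.factorial_ne_zero _)
  have h3 : ((n:ℝ)+1) ≠ 0 := by positivity
  have h5 : (4:ℝ)^n ≠ 0 := by positivity
  have h7 : (4:ℝ)^(n+1) = 4 * 4^n := by ring
  rw [h7]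
  field_simp
  ring

lemma besselJ1_rep (z : ℝ) :
    besselJ1 z = z / π * ∫ θ in (0:ℝ)..π, Real.cos (z * Real.cos θ) * Real.sin θ ^ 2 := by
  set F : ℕ → ℝ → ℝ := fun n θ =>
    ((-1)^n * (z * Real.cos θ)^(2*n) / ((2*n).factorial : ℝ)) * Real.sin θ ^ 2 with hF
  have hcontF : ∀ n, Continuous (F n) := by intro n; fun_prop
  have hint : ∀ n, Integrable (F n) (volume.restrict (Ioc (0:ℝ) π)) := fun n =>
    (hcontF n).integrableOn_Ioc
  have hbound : ∀ n θ, ‖F n θ‖ ≤ |z|^(2*n) / ((2*n).factorial : ℝ) := by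
    intro n θ
    have h1 : |(-1:ℝ)^n * (z * Real.cos θ)^(2*n) / ((2*n).factorial : ℝ)|
        ≤ |z|^(2*n) / ((2*n).factorial : ℝ) := by
      rw [abs_div, abs_mul, abs_pow, abs_neg, abs_one, one_pow, one_mul, abs_pow, abs_mul,
        Nat.abs_cast]
      have hc : |z| * |Real.cos θ| ≤ |z| := by
        calc |z| * |Real.cos θ| ≤ |z| * 1 := by
              gcongr; exact Real.abs_cos_le_one θ
          _ = |z| := mul_one _
      have hp : (|z| * |Real.cos θ|) ^ (2*n) ≤ |z| ^ (2*n) :=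
        pow_le_pow_left₀ (by positivity) hc _
      gcongr
    calc ‖F n θ‖ = |(-1:ℝ)^n * (z * Real.cos θ)^(2*n) / ((2*n).factorial : ℝ)| * |Real.sin θ|^2 := by
          simp only [hF, Real.norm_eq_abs, abs_mul, abs_pow]
      _ ≤ (|z|^(2*n) / ((2*n).factorial : ℝ)) * 1 := by
          apply mul_le_mul h1 _ (by positivity) (by positivity)
          calc |Real.sin θ|^2 ≤ 1^2 := by gcongr; exact Real.abs_sin_le_one θ
            _ = 1 := one_pow 2
      _ = |z|^(2*n) / ((2*n).factorial : ℝ) := mul_one _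
  have hsum0 : Summable (fun n : ℕ => |z|^(2*n) / ((2*n).factorial : ℝ)) := by
    have h := Real.summable_pow_div_factorial |z|
    exact h.comp_injective (fun a b hab => by omega)
  have hsum : Summable (fun n => ∫ θ in Ioc (0:ℝ) π, ‖F n θ‖) := by
    apply Summable.of_nonneg_of_le
      (fun n => integral_nonneg (fun θ => norm_nonneg _))
      (fun n => ?_) (hsum0.mul_left π)
    calc (∫ θ in Ioc (0:ℝ) π, ‖F n θ‖)
        ≤ ∫ _ in Ioc (0:ℝ) π, |z|^(2*n) / ((2*n).factorial : ℝ) :=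
          integral_mono (hint n).norm (integrable_const _) (fun θ => hbound n θ)
      _ = π * (|z|^(2*n) / ((2*n).factorial : ℝ)) := by
          rw [setIntegral_const]
          simp [Real.volume_Ioc, Real.pi_pos.le, ENNReal.toReal_ofReal, smul_eq_mul]
  have hrep : ∀ θ : ℝ, Real.cos (z * Real.cos θ) * Real.sin θ ^ 2 = ∑' n, F n θ := by
    intro θ
    rw [Real.cos_eq_tsum (z * Real.cos θ), ← tsum_mul_right]
  have hswap : (∫ θ in Ioc (0:ℝ) π, Real.cos (z * Real.cos θ) * Real.sin θ ^ 2)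
      = ∑' n, ∫ θ in Ioc (0:ℝ) π, F n θ := by
    simp only [hrep]
    exact (integral_tsum_of_summable_integral_norm hint hsum).symm
  have hIoc : (∫ θ in (0:ℝ)..π, Real.cos (z * Real.cos θ) * Real.sin θ ^ 2)
      = ∫ θ in Ioc (0:ℝ) π, Real.cos (z * Real.cos θ) * Real.sin θ ^ 2 :=
    intervalIntegral.integral_of_le Real.pi_pos.le
  have hterm : ∀ n : ℕ, (∫ θ in Ioc (0:ℝ) π, F n θ)
      = ((-1)^n * z^(2*n) / ((2*n).factorial : ℝ)) *
        (π * (2*n).factorial / (2 * 4^n * n.factorial * ((n+1).factorial : ℝ))) := by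
    intro n
    have : (∫ θ in Ioc (0:ℝ) π, F n θ) = ∫ θ in (0:ℝ)..π, F n θ :=
      (intervalIntegral.integral_of_le Real.pi_pos.le).symm
    rw [this]
    have e : ∀ θ : ℝ, F n θ = ((-1)^n * z^(2*n) / ((2*n).factorial : ℝ)) *
        (Real.cos θ ^ (2*n) * Real.sin θ ^ 2) := by
      intro θ; rw [hF]; simp only [mul_pow]; ring
    simp only [e]
    rw [intervalIntegral.integral_const_mul, cos_pow_sin_sq]
  rw [hIoc, hswap]
  rw [besselJ1, ← tsum_mul_left]
  apply tsum_congr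
  intro n
  rw [hterm n]
  have h1 : ((2*n).factorial : ℝ) ≠ 0 := Nat.cast_ne_zero.2 (Nat.factorial_ne_zero _)
  have h2 : ((n).factorial : ℝ) ≠ 0 := Nat.cast_ne_zero.2 (Nat.factorial_ne_zero _)
  have h3 : (((n+1)).factorial : ℝ) ≠ 0 := Nat.cast_ne_zero.2 (Nat.factorial_ne_zero _)
  have hπ : (π : ℝ) ≠ 0 := Real.pi_ne_zero
  have h4 : ((4:ℝ))^n = 2^(2*n) := by rw [pow_mul]; norm_num
  have h5 : (z/2)^(2*n+1) = z^(2*n+1) / 2^(2*n+1) := div_pow z 2 _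
  rw [h5, h4, pow_succ, pow_succ]
  field_simp

lemma laplace_cos (p c : ℝ) (hp : 0 < p) :
    ∫ α in Ioi (0:ℝ), Real.exp (-(p * α)) * Real.cos (c * α) = p / (p^2 + c^2) := by
  have hpc : (0:ℝ) < p^2 + c^2 := by positivity
  set G : ℝ → ℝ := fun α =>
    Real.exp (-(p*α)) * (c * Real.sin (c*α) - p * Real.cos (c*α)) / (p^2 + c^2) with hG
  have hderiv : ∀ α : ℝ, HasDerivAt G (Real.exp (-(p*α)) * Real.cos (c*α)) α := by
    intro α
    have h1 : HasDerivAt (fun α : ℝ => Real.exp (-(p*α))) (-p * Real.exp (-(p*α))) α := by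
      have := (Real.hasDerivAt_exp (-(p*α))).comp α
        (((hasDerivAt_id α).const_mul p).neg)
      simpa [mul_comm, Function.comp_def] using this
    have hsin : HasDerivAt (fun x : ℝ => Real.sin (c*x)) (Real.cos (c*α) * c) α := by
      simpa [Function.comp_def] using (Real.hasDerivAt_sin (c*α)).comp α ((hasDerivAt_id α).const_mul c)
    have hcos : HasDerivAt (fun x : ℝ => Real.cos (c*x)) (-Real.sin (c*α) * c) α := by
      simpa [Function.comp_def] using (Real.hasDerivAt_cos (c*α)).comp α ((hasDerivAt_id α).const_mul c)
    have h2 := (hsin.const_mul c).sub (hcos.const_mul p)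
    have h3 := (h1.mul h2).div_const (p^2 + c^2)
    refine h3.congr_deriv ?_
    simp only [Pi.sub_apply]
    field_simp
    ring
  have hint : IntegrableOn (fun α => Real.exp (-(p*α)) * Real.cos (c*α)) (Ioi (0:ℝ)) := by
    apply Integrable.mono' (g := fun α => Real.exp (-(p*α)))
    · exact (exp_neg_integrableOn_Ioi 0 hp).congr_fun (fun x _ => by simp only [neg_mul]) measurableSet_Ioi
    · exact ((by fun_prop : Continuous fun α : ℝ =>
        Real.exp (-(p*α)) * Real.cos (c*α))).aestronglyMeasurable
    · filter_upwards with α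
      rw [Real.norm_eq_abs, abs_mul, Real.abs_exp]
      calc Real.exp (-(p*α)) * |Real.cos (c*α)| ≤ Real.exp (-(p*α)) * 1 := by
            gcongr; exact Real.abs_cos_le_one _
        _ = _ := mul_one _
  have hlim : Tendsto G atTop (nhds 0) := by
    have hb : ∀ α : ℝ, ‖G α‖ ≤ ((|c| + |p|) / (p^2 + c^2)) * Real.exp (-(p*α)) := by
      intro α
      rw [hG]
      simp only [Real.norm_eq_abs, abs_div, abs_mul, Real.abs_exp, abs_of_pos hpc]
      rw [div_le_iff₀ hpc]
      have hs : |c * Real.sin (c*α) - p * Real.cos (c*α)| ≤ |c| + |p| := by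
        calc |c * Real.sin (c*α) - p * Real.cos (c*α)|
            ≤ |c * Real.sin (c*α)| + |p * Real.cos (c*α)| := abs_sub _ _
          _ ≤ |c| * 1 + |p| * 1 := by
              rw [abs_mul, abs_mul]
              gcongr
              · exact Real.abs_sin_le_one _
              · exact Real.abs_cos_le_one _
          _ = |c| + |p| := by ring
      calc Real.exp (-(p*α)) * |c * Real.sin (c*α) - p * Real.cos (c*α)|
          ≤ Real.exp (-(p*α)) * (|c| + |p|) := by gcongr
        _ = (|c| + |p|) / (p^2+c^2) * Real.exp (-(p*α)) * (p^2+c^2) := by field_simp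
    apply squeeze_zero_norm hb
    have h0 : Tendsto (fun α : ℝ => Real.exp (-(p*α))) atTop (nhds 0) :=
      Real.tendsto_exp_atBot.comp (tendsto_neg_atTop_atBot.comp (tendsto_id.const_mul_atTop hp))
    simpa using h0.const_mul ((|c| + |p|) / (p^2 + c^2))
  have := integral_Ioi_of_hasDerivAt_of_tendsto' (f := G)
    (f' := fun α => Real.exp (-(p*α)) * Real.cos (c*α))
    (fun α _ => hderiv α) hint hlim
  rw [this, hG]
  simp
  field_simp

private lemma aux_alg (N D M cc dd : ℝ) (hD : D ≠ 0) (hDN : D^2+N^2 ≠ 0) (hdd : dd ≠ 0)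
    (hnum : D^2+N^2+M = cc) (hden : D^2+N^2 = dd) :
    1 + 1/(1+(N/D)^2) * (M/D^2) = cc/dd := by
  have h1 : 1+(N/D)^2 = (D^2+N^2)/D^2 := by field_simp
  rw [h1, one_div_div, ← hnum, ← hden]
  field_simp

lemma integral_inv_cos_sq (a b : ℝ) (ha : 0 < a) (hb : 0 < b) :
    ∫ θ in (0:ℝ)..π, 1 / (a + b * Real.cos θ ^ 2) = π / Real.sqrt (a*(a+b)) := by
  have hab : (0:ℝ) < a + b := by linarith
  set c : ℝ := Real.sqrt (a/(a+b)) with hcdef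
  have hc0 : 0 < c := Real.sqrt_pos.2 (div_pos ha hab)
  have hc2 : c^2 * (a+b) = a := by
    rw [hcdef, sq_sqrt (le_of_lt (div_pos ha hab))]
    field_simp
  have hK : Real.sqrt (a*(a+b)) = c * (a+b) := by
    have hsq : (c*(a+b))^2 = a*(a+b) := by
      rw [mul_pow]; nlinarith [hc2]
    rw [← hsq, Real.sqrt_sq (by positivity)]
  set G : ℝ → ℝ := fun θ => (θ + Real.arctan ((c-1) * Real.sin θ * Real.cos θ /
    (Real.cos θ^2 + c * Real.sin θ^2))) / (c * (a+b)) with hGdef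
  have hderiv : ∀ θ : ℝ, HasDerivAt G (1 / (a + b * Real.cos θ^2)) θ := by
    intro θ
    set s := Real.sin θ with hs
    set t := Real.cos θ with ht
    have hst : s^2 + t^2 = 1 := Real.sin_sq_add_cos_sq θ
    have hD : 0 < t^2 + c*s^2 := by nlinarith [sq_nonneg s, sq_nonneg t]
    have hN : HasDerivAt (fun θ : ℝ => (c-1) * Real.sin θ * Real.cos θ)
        ((c-1) * (t^2 - s^2)) θ := by
      have := ((Real.hasDerivAt_sin θ).const_mul (c-1)).mul (Real.hasDerivAt_cos θ)
      refine this.congr_deriv ?_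
      simp only [← hs, ← ht]; ring
    have hDD : HasDerivAt (fun θ : ℝ => Real.cos θ^2 + c * Real.sin θ^2)
        (2*s*t*(c-1)) θ := by
      have h1 := ((Real.hasDerivAt_cos θ).pow 2)
      have h2 := ((Real.hasDerivAt_sin θ).pow 2).const_mul c
      have := h1.add h2
      refine this.congr_deriv ?_
      simp only [← hs, ← ht]; ring
    have hquot := (hN.div hDD hD.ne')
    have harctan := (Real.hasDerivAt_arctan (((c-1)*s*t) / (t^2+c*s^2))).comp θ hquot
    have hsum := ((hasDerivAt_id θ).add harctan).div_const (c*(a+b))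
    simp only [Function.comp_def, id_eq, ← hs, ← ht] at hsum
    refine hsum.congr_deriv (Eq.symm ?_)
    have hDN : (0:ℝ) < (t^2+c*s^2)^2 + ((c-1)*s*t)^2 := by positivity
    have hden : (t^2+c*s^2)^2 + ((c-1)*s*t)^2 = c^2 + (1-c^2)*t^2 := by
      linear_combination (s^2*c^2 + t^2 + c^2) * hst
    have hnum : (t^2+c*s^2)^2 + ((c-1)*s*t)^2 +
        ((c-1)*(t^2-s^2) * (t^2+c*s^2) - (c-1)*s*t * (2*s*t*(c-1))) = c := by
      linear_combination (c*(s^2+t^2+1)) * hst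
    have habt : 0 < a + b*t^2 := by nlinarith [sq_nonneg t]
    have hden' : (0:ℝ) < c^2 + (1-c^2)*t^2 := by rw [← hden]; exact hDN
    have key := aux_alg ((c-1)*s*t) (t^2+c*s^2)
      ((c-1)*(t^2-s^2) * (t^2+c*s^2) - (c-1)*s*t * (2*s*t*(c-1)))
      c (c^2 + (1-c^2)*t^2) hD.ne' hDN.ne' hden'.ne' hnum hden
    rw [key]
    rw [div_div, div_eq_div_iff habt.ne' (by positivity : ((c^2+(1-c^2)*t^2) * (c*(a+b))) ≠ 0)]
    linear_combination (c - c*t^2) * hc2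
  have hcont : Continuous (fun θ : ℝ => 1 / (a + b * Real.cos θ^2)) := by
    apply Continuous.div continuous_const
    · fun_prop
    · intro θ; nlinarith [sq_nonneg (Real.cos θ)]
  have := intervalIntegral.integral_eq_sub_of_hasDerivAt
    (f := G) (f' := fun θ => 1 / (a + b * Real.cos θ^2))
    (fun θ _ => hderiv θ) (hcont.intervalIntegrable 0 π)
  rw [this, hGdef, hK]
  simp [Real.sin_pi, Real.cos_pi]

theorem A_amplitude_constant_potential (q₀ κ : ℝ) (hq₀ : 0 < q₀) (hκ : 0 < κ) :
    -κ - ∫ α in Ioi (0 : ℝ),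
        Real.exp (-2 * α * κ) * (Real.sqrt q₀ / α * besselJ1 (2 * α * Real.sqrt q₀)) =
      -Real.sqrt (κ ^ 2 + q₀) := by
  set b := Real.sqrt q₀ with hbdef
  have hb : 0 < b := Real.sqrt_pos.2 hq₀
  have hb2 : b^2 = q₀ := Real.sq_sqrt hq₀.le
  set F : ℝ → ℝ → ℝ := fun α θ =>
    Real.exp (-(2*κ*α)) * (Real.cos ((2*b*Real.cos θ) * α) * Real.sin θ^2) with hFdef
  -- Step 1 : pointwise identity on Ioi 0
  have step1 : ∀ α ∈ Ioi (0:ℝ),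
      Real.exp (-2*α*κ) * (b / α * besselJ1 (2*α*b))
        = (2*q₀/π) * ∫ θ in (0:ℝ)..π, F α θ := by
    intro α hα
    have hα0 : (0:ℝ) < α := hα
    rw [besselJ1_rep (2*α*b)]
    have e1 : (∫ θ in (0:ℝ)..π, F α θ)
        = Real.exp (-(2*κ*α)) * ∫ θ in (0:ℝ)..π,
          Real.cos (2*α*b*Real.cos θ) * Real.sin θ ^ 2 := by
      rw [← intervalIntegral.integral_const_mul]
      apply intervalIntegral.integral_congr
      intro θ _
      rw [hFdef]
      dsimp only
      have : (2*b*Real.cos θ) * α = 2*α*b*Real.cos θ := by ring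
      rw [this]
    rw [e1]
    have he : Real.exp (-2*α*κ) = Real.exp (-(2*κ*α)) := by ring_nf
    rw [he]
    have hπ : (π:ℝ) ≠ 0 := Real.pi_ne_zero
    set I := ∫ θ in (0:ℝ)..π, Real.cos (2*α*b*Real.cos θ) * Real.sin θ ^ 2 with hI
    rw [← hb2]
    field_simp
  -- rewrite the main integral using step1
  have step2 : (∫ α in Ioi (0:ℝ),
      Real.exp (-2*α*κ) * (b / α * besselJ1 (2*α*b)))
      = (2*q₀/π) * ∫ α in Ioi (0:ℝ), ∫ θ in Ioc (0:ℝ) π, F α θ := by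
    rw [← integral_const_mul]
    apply setIntegral_congr_fun measurableSet_Ioi
    intro α hα
    dsimp only
    rw [step1 α hα, intervalIntegral.integral_of_le Real.pi_pos.le]
  -- Fubini
  have hcontF : Continuous (fun z : ℝ × ℝ => F z.1 z.2) := by
    rw [hFdef]; fun_prop
  have hFint : Integrable (fun z : ℝ × ℝ => F z.1 z.2)
      ((volume.restrict (Ioi (0:ℝ))).prod (volume.restrict (Ioc (0:ℝ) π))) := by
    apply Integrable.mono' (g := fun z : ℝ × ℝ => Real.exp (-(2*κ) * z.1) * 1)
    · exact Integrable.mul_prod (f := fun α : ℝ => Real.exp (-(2*κ) * α))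
        (g := fun _ : ℝ => (1:ℝ))
        (exp_neg_integrableOn_Ioi 0 (by linarith)) (integrable_const 1)
    · exact hcontF.aestronglyMeasurable
    · filter_upwards with z
      rw [hFdef]
      simp only [norm_mul, Real.norm_eq_abs, Real.abs_exp, mul_one, neg_mul]
      have h1 : |Real.cos ((2*b*Real.cos z.2) * z.1)| ≤ 1 := Real.abs_cos_le_one _
      have h2 : |Real.sin z.2^2| ≤ 1 := by
        rw [abs_pow]
        calc |Real.sin z.2|^2 ≤ 1^2 := by
              gcongr; exact Real.abs_sin_le_one _
          _ = 1 := one_pow 2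
      have e : Real.exp (-(2*κ*z.1)) = Real.exp (-(2*κ)*z.1) := by ring_nf
      calc Real.exp (-(2*κ*z.1)) * (|Real.cos ((2*b*Real.cos z.2) * z.1)| * |Real.sin z.2^2|)
          ≤ Real.exp (-(2*κ*z.1)) * (1 * 1) := by gcongr
        _ = Real.exp (-(2*κ*z.1)) := by ring
  have step3 : (∫ α in Ioi (0:ℝ), ∫ θ in Ioc (0:ℝ) π, F α θ)
      = ∫ θ in Ioc (0:ℝ) π, ∫ α in Ioi (0:ℝ), F α θ :=
    integral_integral_swap hFint
  -- inner Laplace integral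
  have step4 : ∀ θ : ℝ, (∫ α in Ioi (0:ℝ), F α θ)
      = (2*κ/((2*κ)^2+(2*b*Real.cos θ)^2)) * Real.sin θ^2 := by
    intro θ
    have : (∫ α in Ioi (0:ℝ), F α θ)
        = (∫ α in Ioi (0:ℝ), Real.exp (-(2*κ*α)) * Real.cos ((2*b*Real.cos θ)*α))
            * Real.sin θ^2 := by
      rw [← integral_mul_const]
      apply setIntegral_congr_fun measurableSet_Ioi
      intro α _
      rw [hFdef]; ring
    rw [this]
    have hlap := laplace_cos (2*κ) (2*b*Real.cos θ) (by linarith)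
    have e : (∫ α in Ioi (0:ℝ), Real.exp (-(2*κ*α)) * Real.cos ((2*b*Real.cos θ)*α))
        = ∫ α in Ioi (0:ℝ), Real.exp (-(2*κ*α)) * Real.cos ((2*b*Real.cos θ)*α) := rfl
    rw [show (∫ α in Ioi (0:ℝ), Real.exp (-(2*κ*α)) * Real.cos ((2*b*Real.cos θ)*α))
        = 2*κ/((2*κ)^2+(2*b*Real.cos θ)^2) from hlap]
  -- compute the θ integral
  have hpos : ∀ θ : ℝ, (0:ℝ) < κ^2 + q₀ * Real.cos θ^2 := by
    intro θ; nlinarith [sq_nonneg (Real.cos θ)]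
  have hpt : ∀ θ : ℝ, (2*κ/((2*κ)^2+(2*b*Real.cos θ)^2)) * Real.sin θ^2
      = (κ/2 * ((κ^2+q₀)/q₀)) * (1/(κ^2 + q₀ * Real.cos θ^2)) - κ/(2*q₀) := by
    intro θ
    have h1 : (2*b*Real.cos θ)^2 = 4*q₀*Real.cos θ^2 := by
      rw [mul_pow, mul_pow]; rw [hb2]; ring
    rw [h1, Real.sin_sq]
    have h2 := (hpos θ).ne'
    field_simp
    ring
  have hICS := integral_inv_cos_sq (κ^2) q₀ (by positivity) hq₀
  have hIcont : Continuous (fun θ : ℝ => 1/(κ^2 + q₀ * Real.cos θ^2)) := by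
    apply Continuous.div continuous_const
    · fun_prop
    · intro θ; exact (hpos θ).ne'
  have step5 : (∫ θ in Ioc (0:ℝ) π, (2*κ/((2*κ)^2+(2*b*Real.cos θ)^2)) * Real.sin θ^2)
      = (κ/2 * ((κ^2+q₀)/q₀)) * (π / Real.sqrt (κ^2*(κ^2+q₀))) - κ/(2*q₀) * π := by
    rw [← intervalIntegral.integral_of_le Real.pi_pos.le]
    calc (∫ θ in (0:ℝ)..π, (2*κ/((2*κ)^2+(2*b*Real.cos θ)^2)) * Real.sin θ^2)
        = ∫ θ in (0:ℝ)..π,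
            ((κ/2 * ((κ^2+q₀)/q₀)) * (1/(κ^2 + q₀ * Real.cos θ^2)) - κ/(2*q₀)) := by
          apply intervalIntegral.integral_congr
          intro θ _; exact hpt θ
      _ = (κ/2 * ((κ^2+q₀)/q₀)) * (∫ θ in (0:ℝ)..π, 1/(κ^2 + q₀ * Real.cos θ^2))
            - κ/(2*q₀) * π := by
          rw [intervalIntegral.integral_sub
            ((show Continuous fun θ : ℝ => (κ/2 * ((κ^2+q₀)/q₀)) * (1/(κ^2 + q₀ * Real.cos θ^2)) from continuous_const.mul hIcont).intervalIntegrable 0 π)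
            (intervalIntegrable_const),
            intervalIntegral.integral_const_mul, intervalIntegral.integral_const]
          simp
          ring
      _ = _ := by rw [hICS]
  -- assemble
  have hS : Real.sqrt (κ^2*(κ^2+q₀)) = κ * Real.sqrt (κ^2+q₀) := by
    rw [Real.sqrt_mul (sq_nonneg κ), Real.sqrt_sq hκ.le]
  set S := Real.sqrt (κ^2+q₀) with hSdef
  have hS0 : 0 < S := Real.sqrt_pos.2 (by positivity)
  have hS2 : S^2 = κ^2+q₀ := Real.sq_sqrt (by positivity)
  have final : (∫ α in Ioi (0:ℝ),
      Real.exp (-2*α*κ) * (b / α * besselJ1 (2*α*b))) = S - κ := by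
    rw [step2, step3]
    have : (∫ θ in Ioc (0:ℝ) π, ∫ α in Ioi (0:ℝ), F α θ)
        = ∫ θ in Ioc (0:ℝ) π, (2*κ/((2*κ)^2+(2*b*Real.cos θ)^2)) * Real.sin θ^2 := by
      apply setIntegral_congr_fun measurableSet_Ioc
      intro θ _; exact step4 θ
    rw [this, step5, hS, ← hS2]
    have hπ : (π:ℝ) ≠ 0 := Real.pi_ne_zero
    field_simp
  rw [final]
  ring
end
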